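/- arXiv:2304.09134 — 6 statements merged into one kernel-verified Lean document; each statement's English description precedes it below -/
import Mathlib

section
/- Define polynomials f_n(x) over the reals by f_0 = 1, f_1 = x - α, and f_n = (x - 2α) f_{n-1} - (1-α)^2 f_{n-2} for n ≥ 2, where α is a fixed real parameter. Then for all positive integers a, b with a + b = n, the polynomial f_a f_b - (1-α)^2 f_{a-1} f_{b-1} does not depend on the choice of a and b; that is, for any positive integers a, b, c, d with a + b = c + d = n, one has f_a f_b - (1-α)^2 f_{a-1} f_{b-1} = f_c f_d - (1-α)^2 f_{c-1} f_{d-1}. -/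
/-!
For any sequence obeying `u (n + 2) = p * u (n + 1) - q * u n` over a commutative ring, the
quantity `u (a + 1) * u (b + 1) - q * u a * u b` is unchanged when one unit is moved from `b`
to `a`: expanding the two terms of index `+ 2` by the recurrence gives the same expression.
Hence it depends only on `a + b`, and the `f α n` form such a sequence.
-/

open Polynomial

/-- The polynomials `f_n`: characteristic polynomials of the principal submatrix of
`A_α(P_{n+1})` obtained by deleting an end vertex. -/
noncomputable def f (α : ℝ) : ℕ → Polynomial ℝ
  | 0 => 1
  | 1 => X - C α
  | n + 2 => (X - C (2 * α)) * f α (n + 1) - C ((1 - α) ^ 2) * f α n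

section LinearRecurrence

variable {R : Type*} [CommRing R] {p q : R} {u : ℕ → R}

theorem linearRecurrence_cross_succ_left
    (hu : ∀ n, u (n + 2) = p * u (n + 1) - q * u n) (a b : ℕ) :
    u (a + 2) * u (b + 1) - q * u (a + 1) * u b =
      u (a + 1) * u (b + 2) - q * u a * u (b + 1) := by
  rw [hu, hu]
  ring

theorem linearRecurrence_cross_eq_zero_left
    (hu : ∀ n, u (n + 2) = p * u (n + 1) - q * u n) (a b : ℕ) :
    u (a + 1) * u (b + 1) - q * u a * u b =
      u 1 * u (a + b + 1) - q * u 0 * u (a + b) := by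
  induction a generalizing b with
  | zero => simp
  | succ a ih =>
    rw [linearRecurrence_cross_succ_left hu, ih (b + 1),
      show a + (b + 1) = a + 1 + b by omega]

theorem linearRecurrence_cross_eq_of_add_eq
    (hu : ∀ n, u (n + 2) = p * u (n + 1) - q * u n) {a b c d : ℕ} (h : a + b = c + d) :
    u (a + 1) * u (b + 1) - q * u a * u b = u (c + 1) * u (d + 1) - q * u c * u d := by
  rw [linearRecurrence_cross_eq_zero_left hu a, linearRecurrence_cross_eq_zero_left hu c, h]

end LinearRecurrence

theorem f_add_two (α : ℝ) (n : ℕ) :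
    f α (n + 2) = (X - C (2 * α)) * f α (n + 1) - C ((1 - α) ^ 2) * f α n :=
  rfl

theorem stmt0_general (α : ℝ) (n a b c d : ℕ)
    (ha : 0 < a) (hb : 0 < b) (hc : 0 < c) (hd : 0 < d)
    (hab : a + b = n) (hcd : c + d = n) :
    f α a * f α b - C ((1 - α) ^ 2) * f α (a - 1) * f α (b - 1) =
      f α c * f α d - C ((1 - α) ^ 2) * f α (c - 1) * f α (d - 1) := by
  obtain ⟨a, rfl⟩ := Nat.exists_eq_add_of_lt ha
  obtain ⟨b, rfl⟩ := Nat.exists_eq_add_of_lt hb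
  obtain ⟨c, rfl⟩ := Nat.exists_eq_add_of_lt hc
  obtain ⟨d, rfl⟩ := Nat.exists_eq_add_of_lt hd
  simp only [zero_add, Nat.add_sub_cancel]
  exact linearRecurrence_cross_eq_of_add_eq (f_add_two α) (by omega)

theorem stmt0 (α : ℝ) (hα : 0 ≤ α ∧ α < 1) (n a b c d : ℕ)
    (ha : 0 < a) (hb : 0 < b) (hc : 0 < c) (hd : 0 < d)
    (hab : a + b = n) (hcd : c + d = n) :
    f α a * f α b - C ((1 - α) ^ 2) * f α (a - 1) * f α (b - 1) =
      f α c * f α d - C ((1 - α) ^ 2) * f α (c - 1) * f α (d - 1) :=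
  stmt0_general α n a b c d ha hb hc hd hab hcd
end

section
/- Let α ∈ [0,1) and define f_0 = 1, f_1 = x - α, f_n = (x - 2α) f_{n-1} - (1-α)^2 f_{n-2}. For positive integers a ≥ b with a = b + l (l ≥ 1), the telescoping identity f_a f_{b-1} - f_{a-1} f_b = -(1-α)^{2(b-1)} (α f_l + (1-α)^2 f_{l-1}) holds as an identity of polynomials in x. -/
/-! The left-hand side is the Casoratian of the two solutions `n ↦ f (n + l)` and `f` of the
three-term recurrence, evaluated at `b - 1`. A Casoratian is multiplied by `(1 - α) ^ 2` at each
step, so it is `(1 - α) ^ (2 (b - 1))` times its value at `0`, which the recurrence gives directly. -/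

open Polynomial

theorem casoratian_eq_pow_mul {R : Type*} [CommRing R] (p q : R) {u v : ℕ → R}
    (hu : ∀ n, u (n + 2) = p * u (n + 1) - q * u n)
    (hv : ∀ n, v (n + 2) = p * v (n + 1) - q * v n) (k : ℕ) :
    u (k + 1) * v k - u k * v (k + 1) = q ^ k * (u 1 * v 0 - u 0 * v 1) := by
  induction k with
  | zero => simp
  | succ k ih =>
    rw [hu, hv, pow_succ']
    linear_combination q * ih

theorem stmt1_general (α : ℝ) (a b l : ℕ)
    (hb : 0 < b) (hl : 0 < l) (ha : a = b + l) :
    f α a * f α (b - 1) - f α (a - 1) * f α b =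
      -(C ((1 - α) ^ (2 * (b - 1))) * (C α * f α l + C ((1 - α) ^ 2) * f α (l - 1))) := by
  obtain ⟨k, rfl⟩ := Nat.exists_eq_add_of_lt hb
  obtain ⟨m, rfl⟩ := Nat.exists_eq_add_of_lt hl
  subst ha
  have hcas := casoratian_eq_pow_mul _ _ (u := fun n ↦ f α (n + (m + 1)))
    (fun n ↦ by simpa only [Nat.add_right_comm n] using f_add_two α (n + (m + 1))) (f_add_two α) k
  simp only [zero_add, Nat.add_sub_cancel, show k + 1 + (m + 1) - 1 = k + (m + 1) by omega] at hcas ⊢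
  rw [pow_mul, C_pow, hcas, show 1 + (m + 1) = m + 2 by omega, f_add_two]
  simp only [f, C_mul, map_ofNat]
  ring

theorem stmt1 (α : ℝ) (hα : 0 ≤ α ∧ α < 1) (a b l : ℕ)
    (hb : 0 < b) (hl : 0 < l) (ha : a = b + l) :
    f α a * f α (b - 1) - f α (a - 1) * f α b =
      -(C ((1 - α) ^ (2 * (b - 1))) * (C α * f α l + C ((1 - α) ^ 2) * f α (l - 1))) :=
  stmt1_general α a b l hb hl ha
end

section
/- Let α ∈ [0,1) and let f_n be defined by f_0 = 1, f_1 = x - α, f_n = (x - 2α) f_{n-1} - (1-α)^2 f_{n-2}. Let θ_l denote the largest real root of f_l. Then for positive integers a, b, l with a = b + l, and for every real x ≥ θ_l, we have f_{a-1}(x) f_b(x) > f_a(x) f_{b-1}(x). -/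
/-!
Write `f_n` for `(f α n).eval x`. The recurrence gives the Casoratian identity
`f_{m+k+1} f_{m+1} - f_{m+k+2} f_m = (1-α)^{2m} (α f_{k+1} + (1-α)^2 f_k)`,
so it suffices that `f_l ≥ 0` and `f_{l-1} > 0` on `[θ_l, ∞)`. The first holds because `f_l` is
monic, hence positive beyond its largest root. For the second, by induction on `l`: at the
largest root `θ_l` of `f_l` the recurrence gives `f_{l+1}(θ_l) = -(1-α)^2 f_{l-1}(θ_l) < 0`, so
`f_{l+1}` has a root beyond `θ_l`; hence `θ_{l+1} > θ_l`, and `f_l` is positive on `[θ_{l+1}, ∞)`.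
-/

open Polynomial

open Filter Set

section ContinuousTendsto

variable {g : ℝ → ℝ}

theorem exists_zero_ge_of_nonpos (hg : Continuous g) (hg_top : Tendsto g atTop atTop)
    {y : ℝ} (hy : g y ≤ 0) : ∃ z, y ≤ z ∧ g z = 0 :=
  intermediate_value_Ici hg.continuousOn hg_top (mem_Ici.mpr hy)

theorem exists_zero_gt_of_neg (hg : Continuous g) (hg_top : Tendsto g atTop atTop)
    {y : ℝ} (hy : g y < 0) : ∃ z, y < z ∧ g z = 0 := by
  obtain ⟨z, hyz, hz⟩ := exists_zero_ge_of_nonpos hg hg_top hy.le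
  exact ⟨z, hyz.lt_of_ne (by rintro rfl; linarith), hz⟩

theorem pos_of_isGreatest_zeros_lt (hg : Continuous g) (hg_top : Tendsto g atTop atTop)
    {θ x : ℝ} (hθ : IsGreatest {x | g x = 0} θ) (hx : θ < x) :
    0 < g x := by
  by_contra! hgx
  obtain ⟨z, hxz, hz⟩ := exists_zero_ge_of_nonpos hg hg_top hgx
  linarith [hθ.2 hz]

theorem nonneg_of_isGreatest_zeros_le (hg : Continuous g) (hg_top : Tendsto g atTop atTop)
    {θ x : ℝ} (hθ : IsGreatest {x | g x = 0} θ)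
    (hx : θ ≤ x) : 0 ≤ g x := by
  rcases hx.lt_or_eq with hlt | rfl
  · exact (pos_of_isGreatest_zeros_lt hg hg_top hθ hlt).le
  · exact hθ.1.ge

end ContinuousTendsto

theorem Polynomial.exists_isGreatest_zeros {p : ℝ[X]} (hp : p ≠ 0) {r : ℝ} (hr : p.eval r = 0) :
    ∃ θ, IsGreatest {x | p.eval x = 0} θ :=
  (finite_setOfPred_isRoot hp).isCompact.exists_isGreatest ⟨r, hr⟩

theorem eval_f_add_two (α x : ℝ) (n : ℕ) :
    (f α (n + 2)).eval x = (x - 2 * α) * (f α (n + 1)).eval x - (1 - α) ^ 2 * (f α n).eval x := by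
  simp [f]

theorem f_monic_and_natDegree (α : ℝ) : ∀ n, (f α n).Monic ∧ (f α n).natDegree = n
  | 0 => ⟨monic_one, natDegree_one⟩
  | 1 => ⟨monic_X_sub_C α, natDegree_X_sub_C α⟩
  | n + 2 => by
    obtain ⟨hm₁, hd₁⟩ := f_monic_and_natDegree α (n + 1)
    obtain ⟨-, hd₀⟩ := f_monic_and_natDegree α n
    have hm : ((X - C (2 * α)) * f α (n + 1)).Monic := (monic_X_sub_C _).mul hm₁
    have hd : ((X - C (2 * α)) * f α (n + 1)).natDegree = n + 2 := by
      rw [(monic_X_sub_C _).natDegree_mul hm₁, natDegree_X_sub_C, hd₁]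
      ring
    have hlt : (C ((1 - α) ^ 2) * f α n).natDegree < ((X - C (2 * α)) * f α (n + 1)).natDegree :=
      (natDegree_C_mul_le _ _).trans_lt (by omega)
    exact ⟨hm.sub_of_left (degree_lt_degree hlt), (natDegree_sub_eq_left_of_natDegree_lt hlt).trans hd⟩

theorem tendsto_eval_f_atTop (α : ℝ) {n : ℕ} (hn : 0 < n) :
    Tendsto (fun x => (f α n).eval x) atTop atTop := by
  obtain ⟨hm, hd⟩ := f_monic_and_natDegree α n
  refine tendsto_atTop_of_leadingCoeff_nonneg _ ?_ (by rw [hm.leadingCoeff]; exact zero_le_one)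
  rw [degree_eq_natDegree hm.ne_zero, hd]
  exact_mod_cast hn

theorem exists_isGreatest_zeros_f_succ_and_pos {α : ℝ} (hα : α < 1) (n : ℕ) :
    ∃ θ, IsGreatest {x | (f α (n + 1)).eval x = 0} θ ∧ ∀ x, θ ≤ x → 0 < (f α n).eval x := by
  induction n with
  | zero => exact ⟨α, ⟨by simp [f], fun x hx => by simp_all [f, sub_eq_zero]⟩, by simp [f]⟩
  | succ n ih =>
    obtain ⟨θ, hθ, hpos⟩ := ih
    have hneg : (f α (n + 2)).eval θ < 0 := by
      rw [eval_f_add_two, hθ.1]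
      nlinarith [hpos θ le_rfl, pow_pos (sub_pos.mpr hα) 2]
    obtain ⟨r, hθr, hr⟩ := exists_zero_gt_of_neg (f α (n + 2)).continuous
      (tendsto_eval_f_atTop α (by omega)) hneg
    obtain ⟨θ', hθ'⟩ := exists_isGreatest_zeros (f_monic_and_natDegree α (n + 2)).1.ne_zero hr
    refine ⟨θ', hθ', fun x hx => ?_⟩
    exact pos_of_isGreatest_zeros_lt (f α (n + 1)).continuous
      (tendsto_eval_f_atTop α (by omega)) hθ (by linarith [hθ'.2 hr])

theorem eval_f_pos_of_isGreatest_zeros_succ_le {α : ℝ} (hα : α < 1) {n : ℕ} {θ x : ℝ}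
    (hθ : IsGreatest {x | (f α (n + 1)).eval x = 0} θ) (hx : θ ≤ x) : 0 < (f α n).eval x := by
  obtain ⟨θ', hθ', hpos⟩ := exists_isGreatest_zeros_f_succ_and_pos hα n
  exact hpos x (hθ.unique hθ' ▸ hx)

theorem f_casoratian (α x : ℝ) (k m : ℕ) :
    (f α (m + k + 1)).eval x * (f α (m + 1)).eval x
      - (f α (m + k + 2)).eval x * (f α m).eval x
    = (1 - α) ^ (2 * m) * (α * (f α (k + 1)).eval x + (1 - α) ^ 2 * (f α k).eval x) := by
  induction m with
  | zero =>
    simp only [zero_add, mul_zero, pow_zero, one_mul, eval_f_add_two]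
    simp only [f, eval_sub, eval_X, eval_C, eval_one]
    ring
  | succ m ih =>
    rw [show m + 1 + k + 1 = m + k + 2 by omega, show m + 1 + k + 2 = m + k + 1 + 2 by omega,
      eval_f_add_two α x (m + k + 1), eval_f_add_two α x m, mul_add_one, pow_add]
    linear_combination (1 - α) ^ 2 * ih

theorem stmt2 (α : ℝ) (hα : 0 ≤ α ∧ α < 1) (a b l : ℕ)
    (hb : 0 < b) (hl : 0 < l) (ha : a = b + l)
    (θ : ℝ) (hθ : IsGreatest {x : ℝ | (f α l).eval x = 0} θ) :
    ∀ x : ℝ, θ ≤ x →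
      (f α a).eval x * (f α (b - 1)).eval x < (f α (a - 1)).eval x * (f α b).eval x := by
  intro x hx
  obtain ⟨m, rfl⟩ : ∃ m, b = m + 1 := ⟨b - 1, by omega⟩
  obtain ⟨k, rfl⟩ : ∃ k, l = k + 1 := ⟨l - 1, by omega⟩
  obtain ⟨rfl, ha'⟩ : a = m + k + 2 ∧ a - 1 = m + k + 1 := by omega
  have hf_l : 0 ≤ (f α (k + 1)).eval x :=
    nonneg_of_isGreatest_zeros_le (f α (k + 1)).continuous
      (tendsto_eval_f_atTop α k.succ_pos) hθ hx
  have hf_pred : 0 < (f α k).eval x := eval_f_pos_of_isGreatest_zeros_succ_le hα.2 hθ hx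
  have hcas := f_casoratian α x k m
  have hrhs : 0 < (1 - α) ^ (2 * m) * (α * (f α (k + 1)).eval x + (1 - α) ^ 2 * (f α k).eval x) :=
    mul_pos (pow_pos (sub_pos.mpr hα.2) _) (add_pos_of_nonneg_of_pos (mul_nonneg hα.1 hf_l)
      (mul_pos (pow_pos (sub_pos.mpr hα.2) 2) hf_pred))
  rw [ha', Nat.add_sub_cancel]
  linarith
end

section
/- Let A and B be nonnegative symmetric real n × n matrices with A ≥ B entrywise and A ≠ B. Then for every real x ≥ ρ(A) (the spectral radius of A), det(xI - B) ≥ det(xI - A). Moreover, if A is irreducible, then the inequality is strict for all x ≥ ρ(A). -/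
/-- The spectral radius of a real matrix: the largest modulus of a (complex) eigenvalue. -/
noncomputable def specRad {n : ℕ} (A : Matrix (Fin n) (Fin n) ℝ) : ℝ :=
  sSup (Set.image (fun z : ℂ => ‖z‖) (spectrum ℂ (A.map (fun r => (r : ℂ)))))

/-- A matrix is irreducible if for all indices `i j` some power has positive `(i,j)` entry. -/
def Irred {n : ℕ} (A : Matrix (Fin n) (Fin n) ℝ) : Prop :=
  ∀ i j, ∃ k : ℕ, 0 < k ∧ 0 < (A ^ k) i j

/-!
Write `F = χ_B - χ_A`. Jacobi's formula gives `χ_M' = ∑ᵢ χ_{M(i)}`, where `M(i)` deletes row and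
column `i`; deleting a row and a column preserves all hypotheses, including `x ≥ λ_max(A)` in the
form "`x - A` is positive semidefinite". By induction on the size, `F' ≥ 0` and hence `F` is
monotone on `[λ_max(A), ∞)`. At `λ_max(A)` the polynomial `χ_A` vanishes, while `χ_B ≥ 0` since
`vᵀBv ≤ |v|ᵀB|v| ≤ |v|ᵀA|v| ≤ λ_max(A) |v|²` bounds the eigenvalues of `B` by `λ_max(A)`.
If `A` is irreducible and `v` is an eigenvector of `B` realising equality, `|v|` is a nonnegative
eigenvector of `A`, hence positive, and `|v|ᵀ(A - B)|v| = 0` forces `A = B`; so `χ_B(λ_max A) > 0`.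
-/

open Matrix Polynomial Finset

namespace Matrix

section Derivative

variable {n R : Type*} [Fintype n] [DecidableEq n] [CommRing R]

theorem derivative_det (M : Matrix n n R[X]) :
    derivative M.det = ∑ i, (M.updateCol i fun k => derivative (M k i)).det := by
  simp_rw [det_apply', map_sum, derivative_intCast_mul, derivative_prod_finset, mul_sum]
  rw [sum_comm]
  refine sum_congr rfl fun i _ => sum_congr rfl fun σ _ => ?_
  rw [← mul_prod_erase _ _ (mem_univ i), mul_comm (∏ _ ∈ _, _)]
  congr 2
  · simp
  · exact prod_congr rfl fun j hj => by simp [ne_of_mem_erase hj]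

theorem derivative_charpoly (M : Matrix n n R) :
    derivative M.charpoly = M.charmatrix.adjugate.trace := by
  rw [← charpoly_transpose, charpoly, derivative_det, trace]
  refine sum_congr rfl fun i _ => ?_
  rw [diag_apply, adjugate_apply, ← det_transpose (updateRow _ _ _), ← updateCol_transpose,
    ← charmatrix_transpose]
  congr 2
  ext k
  by_cases h : k = i
  · subst h; simp [charmatrix_apply_eq]
  · simp [charmatrix_apply_ne, h]

end Derivative

theorem derivative_charpoly_fin_succ {m : ℕ} {R : Type*} [CommRing R]
    (M : Matrix (Fin (m + 1)) (Fin (m + 1)) R) :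
    derivative M.charpoly = ∑ i : Fin (m + 1), (M.submatrix i.succAbove i.succAbove).charpoly := by
  rw [derivative_charpoly, trace]
  refine sum_congr rfl fun (i : Fin (m + 1)) _ => ?_
  rw [diag_apply, adjugate_fin_succ_eq_det_submatrix, ← two_mul, pow_mul, neg_one_sq, one_pow,
    one_mul, charpoly]
  congr 1
  ext j k
  by_cases h : j = k
  · simp [h, charmatrix_apply_eq]
  · simp [h, charmatrix_apply_ne, Fin.succAbove_right_injective.ne h]

section QuadraticForm

variable {n : Type*} [Fintype n]

theorem dotProduct_mulVec_eq_sum {R : Type*} [CommSemiring R] (A : Matrix n n R) (v : n → R) :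
    v ⬝ᵥ (A *ᵥ v) = ∑ i, ∑ j, v i * A i j * v j := by
  simp only [dotProduct, mulVec, mul_sum, mul_assoc]

theorem pow_mulVec_of_mulVec_eq_smul [DecidableEq n] {R : Type*} [CommSemiring R]
    {A : Matrix n n R} {v : n → R} {c : R} (h : A *ᵥ v = c • v) (k : ℕ) :
    (A ^ k) *ᵥ v = c ^ k • v := by
  induction k with
  | zero => simp
  | succ k ih => rw [pow_succ, ← mulVec_mulVec, h, mulVec_smul, ih, smul_smul, pow_succ']

variable {R : Type*} [CommRing R] [LinearOrder R] [IsStrictOrderedRing R] {A B : Matrix n n R}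

theorem dotProduct_mulVec_le_abs (hB : ∀ i j, 0 ≤ B i j) (v : n → R) :
    v ⬝ᵥ (B *ᵥ v) ≤ |v| ⬝ᵥ (B *ᵥ |v|) := by
  simp only [dotProduct_mulVec_eq_sum, Pi.abs_apply]
  refine sum_le_sum fun i _ => sum_le_sum fun j _ => ?_
  calc v i * B i j * v j ≤ |v i * B i j * v j| := le_abs_self _
    _ = |v i| * B i j * |v j| := by rw [abs_mul, abs_mul, abs_of_nonneg (hB i j)]

theorem dotProduct_mulVec_mono (hBA : ∀ i j, B i j ≤ A i j) {v : n → R} (hv : 0 ≤ v) :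
    v ⬝ᵥ (B *ᵥ v) ≤ v ⬝ᵥ (A *ᵥ v) := by
  simp only [dotProduct_mulVec_eq_sum]
  exact sum_le_sum fun i _ => sum_le_sum fun j _ =>
    mul_le_mul_of_nonneg_right (mul_le_mul_of_nonneg_left (hBA i j) (hv i)) (hv j)

theorem eq_of_dotProduct_mulVec_eq (hBA : ∀ i j, B i j ≤ A i j) {v : n → R}
    (hv : ∀ i, 0 < v i) (h : v ⬝ᵥ (A *ᵥ v) = v ⬝ᵥ (B *ᵥ v)) : A = B := by
  have hterm : ∀ i j, 0 ≤ v i * (A - B) i j * v j := fun i j =>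
    mul_nonneg (mul_nonneg (hv i).le (sub_nonneg.mpr (hBA i j))) (hv j).le
  have hsum : ∑ i, ∑ j, v i * (A - B) i j * v j = 0 := by
    rw [← dotProduct_mulVec_eq_sum, sub_mulVec, dotProduct_sub, h, sub_self]
  ext i j
  have hij := (sum_eq_zero_iff_of_nonneg fun j _ => hterm i j).mp
    ((sum_eq_zero_iff_of_nonneg fun i _ => sum_nonneg fun j _ => hterm i j).mp hsum i
      (mem_univ i)) j (mem_univ j)
  simpa [sub_eq_zero, (hv i).ne', (hv j).ne'] using hij

end QuadraticForm

section Spectrum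

variable {n : Type*} [Fintype n] [DecidableEq n] {A B : Matrix n n ℝ} {x : ℝ}

theorem dotProduct_scalar_sub_mulVec (A : Matrix n n ℝ) (x : ℝ) (v : n → ℝ) :
    v ⬝ᵥ ((scalar n x - A) *ᵥ v) = x * (v ⬝ᵥ v) - v ⬝ᵥ (A *ᵥ v) := by
  simp only [scalar_apply, sub_mulVec, diagonal_const_mulVec, dotProduct_sub, dotProduct_smul,
    smul_eq_mul]

theorem posSemidef_scalar_sub_of_le (hB : B.IsSymm) (hB0 : ∀ i j, 0 ≤ B i j)
    (hBA : ∀ i j, B i j ≤ A i j) (hA : (scalar n x - A).PosSemidef) :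
    (scalar n x - B).PosSemidef := by
  refine .of_dotProduct_mulVec_nonneg (isHermitian_iff_isSymm.mpr ((isSymm_diagonal _).sub hB))
    fun v => ?_
  have habs : |v| ⬝ᵥ |v| = v ⬝ᵥ v := sum_congr rfl fun i _ => abs_mul_abs_self (v i)
  have hA_abs := hA.dotProduct_mulVec_nonneg |v|
  rw [star_trivial, dotProduct_scalar_sub_mulVec, habs] at hA_abs
  rw [star_trivial, dotProduct_scalar_sub_mulVec]
  linarith [dotProduct_mulVec_le_abs hB0 v, dotProduct_mulVec_mono hBA (abs_nonneg v)]

open scoped MatrixOrder in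
theorem IsHermitian.posSemidef_scalar_sub_iff (hA : A.IsHermitian) :
    (scalar n x - A).PosSemidef ↔ ∀ i, hA.eigenvalues i ≤ x := by
  have := le_algebraMap_iff_spectrum_le (R := ℝ) (a := A) (r := x) hA.isSelfAdjoint
  rw [le_iff, hA.spectrum_real_eq_range_eigenvalues, algebraMap_eq_diagonal, Pi.algebraMap_def,
    Algebra.algebraMap_self] at this
  simpa [scalar_apply] using this

theorem IsHermitian.eval_charpoly (hA : A.IsHermitian) (x : ℝ) :
    A.charpoly.eval x = ∏ i, (x - hA.eigenvalues i) := by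
  simp [hA.charpoly_eq, eval_prod]

theorem IsHermitian.eigenvalues_le_of_specRad_le {m : ℕ} {A : Matrix (Fin m) (Fin m) ℝ}
    (hA : A.IsHermitian) (hx : specRad A ≤ x) (i : Fin m) : hA.eigenvalues i ≤ x := by
  have hroot : (A.map (fun r => (r : ℂ))).charpoly.IsRoot (hA.eigenvalues i) := by
    rw [show A.map (fun r => (r : ℂ)) = A.map Complex.ofRealHom from rfl, charpoly_map]
    exact (mem_spectrum_iff_isRoot_charpoly.mp (hA.eigenvalues_mem_spectrum_real i)).map
  have hmem : |hA.eigenvalues i| ∈ (fun z : ℂ => ‖z‖) '' spectrum ℂ (A.map (fun r => (r : ℂ))) :=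
    ⟨_, mem_spectrum_iff_isRoot_charpoly.mpr hroot, by simp⟩
  calc hA.eigenvalues i ≤ |hA.eigenvalues i| := le_abs_self _
    _ ≤ specRad A := le_csSup ((finite_spectrum _).image _).bddAbove hmem
    _ ≤ x := hx

theorem IsHermitian.convex_setOf_posSemidef_scalar_sub (hA : A.IsHermitian) :
    Convex ℝ {x | (scalar n x - A).PosSemidef} :=
  Set.OrdConnected.convex ⟨fun _ hx _ _ _ hz => hA.posSemidef_scalar_sub_iff.mpr
    fun i => (hA.posSemidef_scalar_sub_iff.mp hx i).trans hz.1⟩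

theorem monotoneOn_eval_charpoly_sub_of_submatrix {m : ℕ}
    {A B : Matrix (Fin (m + 1)) (Fin (m + 1)) ℝ} (hA : A.IsHermitian)
    (h : ∀ (i : Fin (m + 1)) x,
      (scalar (Fin m) x - A.submatrix i.succAbove i.succAbove).PosSemidef →
      (A.submatrix i.succAbove i.succAbove).charpoly.eval x ≤
        (B.submatrix i.succAbove i.succAbove).charpoly.eval x) :
    MonotoneOn (fun x => (B.charpoly - A.charpoly).eval x)
      {x | (scalar (Fin (m + 1)) x - A).PosSemidef} := by
  refine monotoneOn_of_deriv_nonneg hA.convex_setOf_posSemidef_scalar_sub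
    (Polynomial.continuous _).continuousOn (Polynomial.differentiable _).differentiableOn
    fun x hx => ?_
  rw [Polynomial.deriv, derivative_sub, derivative_charpoly_fin_succ,
    derivative_charpoly_fin_succ, ← sum_sub_distrib, eval_finsetSum]
  refine sum_nonneg fun i _ => ?_
  have hx' : x ∈ {x | (scalar (Fin (m + 1)) x - A).PosSemidef} := interior_subset hx
  have hi : ((scalar _ x).submatrix i.succAbove i.succAbove -
      A.submatrix i.succAbove i.succAbove).PosSemidef := hx'.submatrix i.succAbove
  rw [scalar_apply, submatrix_diagonal _ _ Fin.succAbove_right_injective] at hi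
  rw [eval_sub, sub_nonneg]
  exact h i x hi

theorem IsHermitian.eval_charpoly_max_le_of_monotoneOn (hA : A.IsHermitian) {i₀ : n}
    (hi₀ : ∀ i, hA.eigenvalues i ≤ hA.eigenvalues i₀)
    (hF : MonotoneOn (fun x => (B.charpoly - A.charpoly).eval x)
      {x | (scalar n x - A).PosSemidef})
    (hx : (scalar n x - A).PosSemidef) :
    B.charpoly.eval (hA.eigenvalues i₀) ≤ B.charpoly.eval x - A.charpoly.eval x := by
  have hA₀ : A.charpoly.eval (hA.eigenvalues i₀) = 0 := by
    rw [hA.eval_charpoly]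
    exact prod_eq_zero (mem_univ i₀) (sub_self _)
  simpa [hA₀] using hF (hA.posSemidef_scalar_sub_iff.mpr hi₀) hx
    (hA.posSemidef_scalar_sub_iff.mp hx i₀)

theorem eval_charpoly_le_of_monotoneOn (hA : A.IsHermitian) (hB : B.IsSymm)
    (hB0 : ∀ i j, 0 ≤ B i j) (hBA : ∀ i j, B i j ≤ A i j)
    (hF : MonotoneOn (fun x => (B.charpoly - A.charpoly).eval x)
      {x | (scalar n x - A).PosSemidef})
    (hx : (scalar n x - A).PosSemidef) :
    A.charpoly.eval x ≤ B.charpoly.eval x := by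
  cases isEmpty_or_nonempty n
  · simp
  obtain ⟨i₀, hi₀⟩ := Finite.exists_max hA.eigenvalues
  have hB₀ := posSemidef_scalar_sub_of_le hB hB0 hBA (hA.posSemidef_scalar_sub_iff.mpr hi₀)
  have := hA.eval_charpoly_max_le_of_monotoneOn hi₀ hF hx
  rw [eval_charpoly] at this
  linarith [hB₀.det_nonneg]

theorem monotoneOn_eval_charpoly_sub {m : ℕ} {A B : Matrix (Fin m) (Fin m) ℝ} (hA : A.IsSymm)
    (hB : B.IsSymm) (hB0 : ∀ i j, 0 ≤ B i j) (hBA : ∀ i j, B i j ≤ A i j) :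
    MonotoneOn (fun x => (B.charpoly - A.charpoly).eval x)
      {x | (scalar (Fin m) x - A).PosSemidef} := by
  induction m with
  | zero => simp [MonotoneOn]
  | succ m ih =>
    refine monotoneOn_eval_charpoly_sub_of_submatrix (isHermitian_iff_isSymm.mpr hA)
      fun i x hx => ?_
    have hAi := hA.submatrix i.succAbove
    have hBi := hB.submatrix i.succAbove
    exact eval_charpoly_le_of_monotoneOn (isHermitian_iff_isSymm.mpr hAi) hBi
      (fun _ _ => hB0 _ _) (fun _ _ => hBA _ _) (ih hAi hBi (fun _ _ => hB0 _ _)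
        (fun _ _ => hBA _ _)) hx

end Spectrum

end Matrix

theorem Irred.pos_of_mulVec_eq_smul {m : ℕ} {A : Matrix (Fin m) (Fin m) ℝ} (hirr : Irred A)
    (hA : ∀ i j, 0 ≤ A i j) {u : Fin m → ℝ} {c : ℝ} (hu : 0 ≤ u) {i : Fin m} (hi : 0 < u i)
    (hAu : A *ᵥ u = c • u) (j : Fin m) : 0 < u j := by
  obtain ⟨k, -, hk⟩ := hirr j i
  have hle : (A ^ k) j i * u i ≤ c ^ k * u j := by
    have hAku := congrFun (pow_mulVec_of_mulVec_eq_smul hAu k) j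
    rw [Pi.smul_apply, smul_eq_mul] at hAku
    rw [← hAku]
    exact single_le_sum (f := fun l => (A ^ k) j l * u l)
      (fun l _ => mul_nonneg (pow_apply_nonneg hA k j l) (hu l)) (mem_univ i)
  have huj : 0 ≤ u j := hu j
  refine huj.lt_of_ne fun h => ?_
  rw [← h, mul_zero] at hle
  exact (mul_pos hk hi).not_ge hle

theorem Matrix.IsHermitian.eigenvalues_lt_of_irred {m : ℕ} {A B : Matrix (Fin m) (Fin m) ℝ}
    (hA : A.IsHermitian) (hB : B.IsHermitian) (hB0 : ∀ i j, 0 ≤ B i j)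
    (hBA : ∀ i j, B i j ≤ A i j) (hirr : Irred A) (hne : A ≠ B) {i₀ : Fin m}
    (hi₀ : ∀ i, hA.eigenvalues i ≤ hA.eigenvalues i₀) (j : Fin m) :
    hB.eigenvalues j < hA.eigenvalues i₀ := by
  by_contra! hj
  -- with `μ = hB.eigenvalues j` and `u = |w|`, all of these are equalities:
  -- `x₀|w|² ≤ μ|w|² = wᵀBw ≤ uᵀBu ≤ uᵀAu ≤ x₀|u|² = x₀|w|²`
  set x₀ := hA.eigenvalues i₀
  set w : Fin m → ℝ := ⇑(hB.eigenvectorBasis j)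
  set u := |w|
  have hD : (scalar (Fin m) x₀ - A).PosSemidef := hA.posSemidef_scalar_sub_iff.mpr hi₀
  have huu : u ⬝ᵥ u = w ⬝ᵥ w := sum_congr rfl fun i _ => abs_mul_abs_self (w i)
  have hww : 0 ≤ w ⬝ᵥ w := sum_nonneg fun i _ => mul_self_nonneg (w i)
  have hBw : w ⬝ᵥ (B *ᵥ w) = hB.eigenvalues j * (w ⬝ᵥ w) := by
    rw [hB.mulVec_eigenvectorBasis j, dotProduct_smul, smul_eq_mul]
  have hD_u := hD.dotProduct_mulVec_nonneg u
  rw [star_trivial, dotProduct_scalar_sub_mulVec, huu] at hD_u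
  have hchain := mul_le_mul_of_nonneg_right hj hww
  have hB_abs := dotProduct_mulVec_le_abs hB0 w
  have hBA_u := dotProduct_mulVec_mono hBA (abs_nonneg w)
  have hAu : A *ᵥ u = x₀ • u := by
    have hzero : star u ⬝ᵥ ((scalar (Fin m) x₀ - A) *ᵥ u) = 0 := by
      rw [star_trivial, dotProduct_scalar_sub_mulVec, huu]; linarith
    rw [hD.dotProduct_mulVec_zero_iff, sub_mulVec, sub_eq_zero, scalar_apply,
      diagonal_const_mulVec] at hzero
    exact hzero.symm
  have hw : w ≠ 0 := by simpa [w] using hB.eigenvectorBasis.orthonormal.ne_zero j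
  obtain ⟨i, hi⟩ := Function.ne_iff.mp hw
  have hupos := hirr.pos_of_mulVec_eq_smul (fun a b => (hB0 a b).trans (hBA a b))
    (abs_nonneg w) (abs_pos.mpr hi) hAu
  exact hne (eq_of_dotProduct_mulVec_eq hBA hupos (by linarith))

theorem stmt4 {n : ℕ} (A B : Matrix (Fin n) (Fin n) ℝ)
    (hAs : A.IsSymm) (hBs : B.IsSymm) (hB0 : ∀ i j, 0 ≤ B i j)
    (hBA : ∀ i j, B i j ≤ A i j) (hne : A ≠ B) :
    (∀ x : ℝ, specRad A ≤ x → (Matrix.charpoly A).eval x ≤ (Matrix.charpoly B).eval x) ∧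
    (Irred A → ∀ x : ℝ, specRad A ≤ x →
      (Matrix.charpoly A).eval x < (Matrix.charpoly B).eval x) := by
  have hA := isHermitian_iff_isSymm.mpr hAs
  have hB := isHermitian_iff_isSymm.mpr hBs
  have hF := monotoneOn_eval_charpoly_sub hAs hBs hB0 hBA
  have hD : ∀ x, specRad A ≤ x → (scalar (Fin n) x - A).PosSemidef := fun x hx =>
    hA.posSemidef_scalar_sub_iff.mpr (hA.eigenvalues_le_of_specRad_le hx)
  refine ⟨fun x hx => eval_charpoly_le_of_monotoneOn hA hBs hB0 hBA hF (hD x hx),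
    fun hirr x hx => ?_⟩
  cases isEmpty_or_nonempty (Fin n)
  · exact absurd (Subsingleton.elim A B) hne
  obtain ⟨i₀, hi₀⟩ := Finite.exists_max hA.eigenvalues
  have hB_pos : 0 < B.charpoly.eval (hA.eigenvalues i₀) := by
    rw [hB.eval_charpoly]
    exact prod_pos fun j _ => sub_pos.mpr (hA.eigenvalues_lt_of_irred hB hB0 hBA hirr hne hi₀ j)
  linarith [hA.eval_charpoly_max_le_of_monotoneOn hi₀ hF (hD x hx)]
end

section
/- Let G and H be rooted weighted graphs with roots u and v respectively, and let G·H denote their coalescence (identify u with v, adding loop weights at the identified vertex). Then φ(G·H) = φ(G)·φ(H − v) + φ(G − u)·φ(H) − x·φ(G − u)·φ(H − v). -/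
/-!
Over any commutative ring, the determinant of the coalescence of two square matrices `P`, `Q`
(rooted at `u`, `v`, root diagonal entries added) is `det P * det Q' + det P' * det Q`, where `'`
deletes the root: split the root row into its `P`-part and its `Q`-part; each of the two resulting
determinants is block triangular. The characteristic matrix of `G·H` is the coalescence of
`xI - A(G)` with `xI - A(H) - x E_vv`, since the identified vertex carries `x` only once, and
removing `x` from a diagonal entry lowers the determinant by `x` times the complementary minor.
-/

open Matrix Polynomial

/-- The coalescence of two rooted weighted graphs, given by their (possibly looped)
weighted adjacency matrices `G` (root `u`) and `H` (root `v`): the roots are identified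
into the vertex `Sum.inl u`, whose loop weight is the sum of the two loop weights. -/
def coal {m k : ℕ} (G : Matrix (Fin (m + 1)) (Fin (m + 1)) ℝ)
    (H : Matrix (Fin (k + 1)) (Fin (k + 1)) ℝ) (u : Fin (m + 1)) (v : Fin (k + 1)) :
    Matrix (Fin (m + 1) ⊕ Fin k) (Fin (m + 1) ⊕ Fin k) ℝ := fun x y =>
  match x, y with
  | Sum.inl i, Sum.inl i' => G i i' + (if i = u ∧ i' = u then H v v else 0)
  | Sum.inl i, Sum.inr j => if i = u then H v (v.succAbove j) else 0
  | Sum.inr j, Sum.inl i => if i = u then H (v.succAbove j) v else 0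
  | Sum.inr j, Sum.inr j' => H (v.succAbove j) (v.succAbove j')

-- `coal` over an arbitrary coefficient type, so that it also applies to characteristic matrices.
def coalesce {R : Type*} [Add R] [Zero R] {m k : ℕ} (P : Matrix (Fin (m + 1)) (Fin (m + 1)) R)
    (Q : Matrix (Fin (k + 1)) (Fin (k + 1)) R) (u : Fin (m + 1)) (v : Fin (k + 1)) :
    Matrix (Fin (m + 1) ⊕ Fin k) (Fin (m + 1) ⊕ Fin k) R := fun x y =>
  match x, y with
  | Sum.inl i, Sum.inl i' => P i i' + (if i = u ∧ i' = u then Q v v else 0)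
  | Sum.inl i, Sum.inr j => if i = u then Q v (v.succAbove j) else 0
  | Sum.inr j, Sum.inl i => if i = u then Q (v.succAbove j) v else 0
  | Sum.inr j, Sum.inr j' => Q (v.succAbove j) (v.succAbove j')

-- Regroups the vertices of the coalescence as `(G - u) ⊕ H` instead of `G ⊕ (H - v)`.
def sumMoveRootEquiv {m k : ℕ} (u : Fin (m + 1)) (v : Fin (k + 1)) :
    Fin m ⊕ Fin (k + 1) ≃ Fin (m + 1) ⊕ Fin k where
  toFun := Sum.elim (fun a => .inl (u.succAbove a)) (Fin.insertNth v (.inl u) .inr)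
  invFun := Sum.elim (Fin.insertNth u (.inr v) .inl) (fun j => .inr (v.succAbove j))
  left_inv := by
    rintro (a | b)
    · simp
    · cases b using Fin.succAboveCases v <;> simp
  right_inv := by
    rintro (i | j)
    · cases i using Fin.succAboveCases u <;> simp
    · simp

section MoveRoot

variable {m k : ℕ} (u : Fin (m + 1)) (v : Fin (k + 1))

@[simp]
theorem sumMoveRootEquiv_inl (a : Fin m) :
    sumMoveRootEquiv u v (.inl a) = .inl (u.succAbove a) := rfl

@[simp]
theorem sumMoveRootEquiv_inr_self : sumMoveRootEquiv u v (.inr v) = .inl u := by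
  simp [sumMoveRootEquiv]

@[simp]
theorem sumMoveRootEquiv_inr_succAbove (j : Fin k) :
    sumMoveRootEquiv u v (.inr (v.succAbove j)) = .inr j := by
  simp [sumMoveRootEquiv]

end MoveRoot

section Determinants

variable {R : Type*} [CommRing R]

theorem submatrix_succAbove_sub_single {n : ℕ} {β γ : Type*} [DecidableEq β]
    (A : Matrix (Fin (n + 1)) β R) (i : Fin (n + 1)) (j : β) (c : R) (f : γ → β) :
    (A - single i j c).submatrix i.succAbove f = A.submatrix i.succAbove f := by
  ext a b
  simp [single_apply_of_ne]

theorem det_sub_single_self {n : ℕ} (A : Matrix (Fin (n + 1)) (Fin (n + 1)) R)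
    (i : Fin (n + 1)) (c : R) :
    (A - single i i c).det = A.det - c * (A.submatrix i.succAbove i.succAbove).det := by
  rw [det_succ_row _ i, det_succ_row A i]
  simp only [submatrix_succAbove_sub_single, Matrix.sub_apply, mul_sub, sub_mul,
    Finset.sum_sub_distrib, single_apply]
  simp [Even.neg_one_pow ⟨(i : ℕ), rfl⟩]

theorem charmatrix_submatrix {n p : Type*} [DecidableEq n] [Fintype n] [DecidableEq p]
    [Fintype p] (M : Matrix n n R) {e : p → n} (he : Function.Injective e) :
    (charmatrix M).submatrix e e = charmatrix (M.submatrix e e) := by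
  ext i j
  by_cases h : i = j
  · subst h; simp
  · simp [charmatrix_apply_ne _ _ _ h, charmatrix_apply_ne _ _ _ (he.ne h)]

variable {m k : ℕ} (P : Matrix (Fin (m + 1)) (Fin (m + 1)) R)
    (Q : Matrix (Fin (k + 1)) (Fin (k + 1)) R) (u : Fin (m + 1)) (v : Fin (k + 1))

theorem coalesce_apply_inl_self :
    coalesce P Q u v (.inl u) =
      Sum.elim (P u) 0 + Sum.elim (Pi.single u (Q v v)) (fun j => Q v (v.succAbove j)) := by
  ext (i | j)
  · by_cases h : i = u
    · subst h; simp [coalesce]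
    · simp [coalesce, h]
  · simp [coalesce]

theorem coalesce_updateRow_inl_self_left :
    (coalesce P Q u v).updateRow (.inl u) (Sum.elim (P u) 0) =
      fromBlocks P 0 (of fun j i => if i = u then Q (v.succAbove j) v else 0)
        (Q.submatrix v.succAbove v.succAbove) := by
  ext (i | j) (i' | j')
  · by_cases h : i = u
    · subst h; simp
    · simp [coalesce, updateRow_apply, h]
  · by_cases h : i = u
    · subst h; simp
    · simp [coalesce, updateRow_apply, h]
  · simp [coalesce]
  · simp [coalesce]

theorem coalesce_updateRow_inl_self_right :
    ((coalesce P Q u v).updateRow (.inl u)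
        (Sum.elim (Pi.single u (Q v v)) (fun j => Q v (v.succAbove j)))).submatrix
        (sumMoveRootEquiv u v) (sumMoveRootEquiv u v) =
      fromBlocks (P.submatrix u.succAbove u.succAbove)
        (of fun a b => if b = v then P (u.succAbove a) u else 0) 0 Q := by
  ext (a | b) (a' | b')
  · simp [coalesce, updateRow_apply]
  · cases b' using Fin.succAboveCases v <;> simp [coalesce, updateRow_apply]
  · cases b using Fin.succAboveCases v <;> simp [coalesce, updateRow_apply]
  · cases b using Fin.succAboveCases v <;> cases b' using Fin.succAboveCases v <;>
      simp [coalesce, updateRow_apply]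

theorem det_coalesce :
    (coalesce P Q u v).det = P.det * (Q.submatrix v.succAbove v.succAbove).det
      + (P.submatrix u.succAbove u.succAbove).det * Q.det := by
  calc (coalesce P Q u v).det
      = ((coalesce P Q u v).updateRow (.inl u) (coalesce P Q u v (.inl u))).det := by
        rw [updateRow_eq_self]
    _ = _ := by
        rw [coalesce_apply_inl_self, det_updateRow_add, coalesce_updateRow_inl_self_left,
          det_fromBlocks_zero₁₂,
          ← det_submatrix_equiv_self (sumMoveRootEquiv u v) (updateRow _ _ _),
          coalesce_updateRow_inl_self_right, det_fromBlocks_zero₂₁]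

theorem charmatrix_coalesce :
    charmatrix (coalesce P Q u v) = coalesce (charmatrix P) (charmatrix Q - single v v X) u v := by
  ext (i | j) (i' | j') : 1
  · by_cases h : i = i'
    · subst h
      by_cases hu : i = u
      · subst hu; simp [coalesce]; ring
      · simp [coalesce, hu]
    · have : ¬(i = u ∧ i' = u) := fun h' => h (h'.1.trans h'.2.symm)
      simp [coalesce, h, this]
  · by_cases h : i = u <;> simp [coalesce, h, charmatrix_apply_ne]
  · by_cases h : i' = u <;> simp [coalesce, h, charmatrix_apply_ne]
  · by_cases h : j = j'
    · subst h; simp [coalesce, single_apply_of_ne]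
    · simp [coalesce, h, single_apply_of_ne]

end Determinants

theorem stmt7_general {m k : ℕ} (G : Matrix (Fin (m + 1)) (Fin (m + 1)) ℝ)
    (H : Matrix (Fin (k + 1)) (Fin (k + 1)) ℝ)
    (u : Fin (m + 1)) (v : Fin (k + 1)) :
    (coal G H u v).charpoly =
      G.charpoly * (H.submatrix v.succAbove v.succAbove).charpoly +
        (G.submatrix u.succAbove u.succAbove).charpoly * H.charpoly -
          Polynomial.X * (G.submatrix u.succAbove u.succAbove).charpoly *
            (H.submatrix v.succAbove v.succAbove).charpoly := by
  calc (coal G H u v).charpoly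
      = (coalesce (charmatrix G) (charmatrix H - single v v X) u v).det := by
        rw [← charmatrix_coalesce]; rfl
    _ = _ := by
        rw [det_coalesce, submatrix_succAbove_sub_single, det_sub_single_self,
          charmatrix_submatrix G Fin.succAbove_right_injective,
          charmatrix_submatrix H Fin.succAbove_right_injective]
        simp only [charpoly]
        ring

theorem stmt7 {m k : ℕ} (G : Matrix (Fin (m + 1)) (Fin (m + 1)) ℝ)
    (H : Matrix (Fin (k + 1)) (Fin (k + 1)) ℝ)
    (hG : G.IsSymm) (hH : H.IsSymm) (hG0 : ∀ i j, 0 ≤ G i j) (hH0 : ∀ i j, 0 ≤ H i j)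
    (u : Fin (m + 1)) (v : Fin (k + 1)) :
    (coal G H u v).charpoly =
      G.charpoly * (H.submatrix v.succAbove v.succAbove).charpoly +
        (G.submatrix u.succAbove u.succAbove).charpoly * H.charpoly -
          Polynomial.X * (G.submatrix u.succAbove u.succAbove).charpoly *
            (H.submatrix v.succAbove v.succAbove).charpoly :=
  stmt7_general G H u v
end

section
/- Let a = (a₁,...,a_k) be a nondecreasing sequence of positive integers and suppose there are indices i+1 ≤ j₁ < j₂ ≤ k with a_{j₂} − a_{j₁} ≥ 2. Choose j₁ maximal and j₂ minimal with this property. Define p by p_{j₁} = a_{j₁}+1, p_{j₂} = a_{j₂}−1, and p_j = a_j otherwise. Then p is again a nondecreasing sequence of positive integers with the same sum, and a strictly precedes p in lexicographic order while p strictly precedes any nondecreasing sequence b of the same length and sum satisfying b_j = a_j for j < i, b_i = ⋯ = b_{k−1} = a_i + 1 and b_k > a_k whenever a_i = a_{i+1} and a_k ≥ a_i + 3. -/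
/-!
Maximality of `j₁` and minimality of `j₂` squeeze every entry strictly between them to
`a_{j₁} + 1`; every other entry after `j₁` exceeds `a_{j₁}` and every other entry before `j₂`
is below `a_{j₂}`, so moving one unit from position `j₂` to position `j₁` keeps the sequence
nondecreasing. The new sequence first differs from `a` at `j₁`, upwards, and from any such `b`
at `i < j₁`, where it still has `a_i < a_i + 1 = b_i`.
-/

namespace List

variable {α : Type*}

theorem forall_mem_iff_getD {l : List α} {P : α → Prop} (d : α) :
    (∀ x ∈ l, P x) ↔ ∀ j < l.length, P (l.getD j d) := by
  rw [forall_mem_iff_getElem]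
  exact forall₂_congr fun j hj => by rw [getD_eq_getElem l d hj]

theorem pairwise_iff_getD {l : List α} {R : α → α → Prop} (d : α) :
    l.Pairwise R ↔ ∀ m n, m < n → n < l.length → R (l.getD m d) (l.getD n d) := by
  rw [pairwise_iff_getElem]
  constructor
  · intro h m n hmn hn
    rw [getD_eq_getElem l d (hmn.trans hn), getD_eq_getElem l d hn]
    exact h m n _ hn hmn
  · intro h m n hm hn hmn
    have := h m n hmn hn
    rwa [getD_eq_getElem l d hm, getD_eq_getElem l d hn] at this

theorem Pairwise.getD_le_getD [Preorder α] {l : List α} (hl : l.Pairwise (· ≤ ·)) (d : α)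
    {m n : ℕ} (hmn : m ≤ n) (hn : n < l.length) : l.getD m d ≤ l.getD n d := by
  rcases hmn.eq_or_lt with rfl | hlt
  · exact le_rfl
  · exact (pairwise_iff_getD d).1 hl m n hlt hn

theorem lex_lt_of_getD [LT α] {l₁ l₂ : List α} (d : α) {m : ℕ} (h₁ : m < l₁.length)
    (h₂ : m < l₂.length) (heq : ∀ j < m, l₁.getD j d = l₂.getD j d)
    (hlt : l₁.getD m d < l₂.getD m d) : Lex (· < ·) l₁ l₂ := by
  rw [lex_lt, List.lt_iff_exists]
  refine .inr ⟨m, h₁, h₂, fun j hj => ?_, ?_⟩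
  · have := heq j hj
    rwa [getD_eq_getElem _ d (hj.trans h₁), getD_eq_getElem _ d (hj.trans h₂)] at this
  · rwa [getD_eq_getElem _ d h₁, getD_eq_getElem _ d h₂] at hlt

theorem sum_eq_sum_range_getD [AddCommMonoid α] (l : List α) :
    l.sum = ∑ j ∈ Finset.range l.length, l.getD j 0 := by
  induction l with
  | nil => simp
  | cons x t ih => simp [Finset.sum_range_succ', ih, add_comm]

theorem sum_eq_of_getD_eq_of_ne [AddCommMonoid α] {l₁ l₂ : List α} {n j₁ j₂ : ℕ}
    (h₁ : l₁.length = n) (h₂ : l₂.length = n) (hj : j₁ ≠ j₂) (hj₁ : j₁ < n) (hj₂ : j₂ < n)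
    (heq : ∀ j < n, j ≠ j₁ → j ≠ j₂ → l₁.getD j 0 = l₂.getD j 0)
    (hpair : l₁.getD j₁ 0 + l₁.getD j₂ 0 = l₂.getD j₁ 0 + l₂.getD j₂ 0) :
    l₁.sum = l₂.sum := by
  have hsub : {j₁, j₂} ⊆ Finset.range n := by simp [Finset.insert_subset_iff, hj₁, hj₂]
  rw [sum_eq_sum_range_getD, sum_eq_sum_range_getD, h₁, h₂, ← Finset.sum_sdiff hsub,
    ← Finset.sum_sdiff hsub (f := fun j => l₂.getD j 0), Finset.sum_pair hj,
    Finset.sum_pair hj, hpair]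
  congr 1
  refine Finset.sum_congr rfl fun j hj' => ?_
  simp only [Finset.mem_sdiff, Finset.mem_range, Finset.mem_insert, Finset.mem_singleton,
    not_or] at hj'
  exact heq j hj'.1 hj'.2.1 hj'.2.2

end List

section Exchange

variable {a p : List ℕ} {k i j₁ j₂ : ℕ}

theorem getD_lt_getD_of_minimal_gap (hal : a.length = k) (hasort : a.Pairwise (· ≤ ·))
    (hj12 : j₁ < j₂) (hj2k : j₂ < k) (hgap : a.getD j₁ 0 + 2 ≤ a.getD j₂ 0)
    (hmin : ∀ q', j₁ < q' → q' < k → a.getD j₁ 0 + 2 ≤ a.getD q' 0 → j₂ ≤ q')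
    {m : ℕ} (hm : m < j₂) (hm₁ : m ≠ j₁) : a.getD m 0 < a.getD j₂ 0 := by
  rcases hm₁.lt_or_gt with h | h
  · have := hasort.getD_le_getD 0 h.le (by omega)
    omega
  · have := mt (hmin m h (by omega)) (by omega)
    omega

theorem getD_lt_getD_of_maximal_gap (hal : a.length = k) (hasort : a.Pairwise (· ≤ ·))
    (hij : i + 1 ≤ j₁) (hj2k : j₂ < k) (hgap : a.getD j₁ 0 + 2 ≤ a.getD j₂ 0)
    (hmax : ∀ p' q', i + 1 ≤ p' → p' < q' → q' < k → a.getD p' 0 + 2 ≤ a.getD q' 0 → p' ≤ j₁)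
    {n : ℕ} (hn₁ : j₁ < n) (hn : n < k) (hn₂ : n ≠ j₂) : a.getD j₁ 0 < a.getD n 0 := by
  rcases hn₂.lt_or_gt with h | h
  · have := mt (hmax n j₂ (by omega) h hj2k) (by omega)
    omega
  · have := hasort.getD_le_getD 0 h.le (by omega)
    omega

theorem pairwise_le_of_exchange (hal : a.length = k) (hpl : p.length = k)
    (hasort : a.Pairwise (· ≤ ·)) (hgap : a.getD j₁ 0 + 2 ≤ a.getD j₂ 0)
    (hpj1 : p.getD j₁ 0 = a.getD j₁ 0 + 1) (hpj2 : p.getD j₂ 0 = a.getD j₂ 0 - 1)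
    (hpo : ∀ j < k, j ≠ j₁ → j ≠ j₂ → p.getD j 0 = a.getD j 0)
    (hbelow : ∀ m < j₂, m ≠ j₁ → a.getD m 0 < a.getD j₂ 0)
    (habove : ∀ n, j₁ < n → n < k → n ≠ j₂ → a.getD j₁ 0 < a.getD n 0) :
    p.Pairwise (· ≤ ·) := by
  have hp_le : ∀ j < k, j ≠ j₁ → p.getD j 0 ≤ a.getD j 0 := fun j hj h₁ => by
    rcases eq_or_ne j j₂ with rfl | h₂
    · omega
    · exact (hpo j hj h₁ h₂).le
  have hle_p : ∀ j < k, j ≠ j₂ → a.getD j 0 ≤ p.getD j 0 := fun j hj h₂ => by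
    rcases eq_or_ne j j₁ with rfl | h₁
    · omega
    · exact (hpo j hj h₁ h₂).ge
  rw [List.pairwise_iff_getD 0, hpl]
  intro m n hmn hn
  rcases eq_or_ne m j₁ with rfl | hm₁ <;> rcases eq_or_ne n j₂ with rfl | hn₂
  · omega
  · have := habove n hmn hn hn₂
    have := hle_p n hn hn₂
    omega
  · have := hbelow m hmn hm₁
    have := hp_le m (by omega) hm₁
    omega
  · have := hp_le m (by omega) hm₁
    have := hle_p n hn hn₂
    have := hasort.getD_le_getD 0 hmn.le (by omega)
    omega

end Exchange

theorem stmt13_general (k i j₁ j₂ : ℕ) (a p : List ℕ)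
    (hal : a.length = k) (hasort : a.Pairwise (· ≤ ·)) (hapos : ∀ x ∈ a, 0 < x)
    -- indices with `a_{j₂} - a_{j₁} ≥ 2`, `i + 1 ≤ j₁ < j₂ ≤ k` (0-indexed: `j₂ < k`)
    (hij : i + 1 ≤ j₁) (hj12 : j₁ < j₂) (hj2k : j₂ < k)
    (hgap : a.getD j₁ 0 + 2 ≤ a.getD j₂ 0)
    -- `j₁` maximal and `j₂` minimal with this property
    (hmax : ∀ p' q', i + 1 ≤ p' → p' < q' → q' < k → a.getD p' 0 + 2 ≤ a.getD q' 0 → p' ≤ j₁)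
    (hmin : ∀ q', j₁ < q' → q' < k → a.getD j₁ 0 + 2 ≤ a.getD q' 0 → j₂ ≤ q')
    -- the exchanged sequence `p`
    (hpl : p.length = k)
    (hpj1 : p.getD j₁ 0 = a.getD j₁ 0 + 1) (hpj2 : p.getD j₂ 0 = a.getD j₂ 0 - 1)
    (hpo : ∀ j < k, j ≠ j₁ → j ≠ j₂ → p.getD j 0 = a.getD j 0) :
    p.Pairwise (· ≤ ·) ∧ (∀ x ∈ p, 0 < x) ∧ p.sum = a.sum ∧ List.Lex (· < ·) a p ∧
    ∀ b : List ℕ, b.length = k → b.Pairwise (· ≤ ·) → (∀ x ∈ b, 0 < x) → b.sum = a.sum →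
      (∀ j < i, b.getD j 0 = a.getD j 0) →
      (∀ j, i ≤ j → j < k - 1 → b.getD j 0 = a.getD i 0 + 1) →
      a.getD (k - 1) 0 < b.getD (k - 1) 0 →
      List.Lex (· < ·) p b := by
  have hpos : ∀ x ∈ p, 0 < x := by
    rw [List.forall_mem_iff_getD 0, hpl]
    intro j hj
    rcases eq_or_ne j j₂ with rfl | hj₂
    · omega
    rcases eq_or_ne j j₁ with rfl | hj₁
    · omega
    rw [hpo j hj hj₁ hj₂]
    exact (List.forall_mem_iff_getD 0).1 hapos j (by omega)
  refine ⟨pairwise_le_of_exchange hal hpl hasort hgap hpj1 hpj2 hpo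
      (fun _ => getD_lt_getD_of_minimal_gap hal hasort hj12 hj2k hgap hmin)
      (fun _ => getD_lt_getD_of_maximal_gap hal hasort hij hj2k hgap hmax),
    hpos, List.sum_eq_of_getD_eq_of_ne hpl hal hj12.ne (by omega) hj2k hpo (by omega),
    List.lex_lt_of_getD 0 (m := j₁) (by omega) (by omega)
      (fun j hj => (hpo j (by omega) (by omega) (by omega)).symm) (by omega), ?_⟩
  intro b hbl _ _ _ hblo hbmid _
  refine List.lex_lt_of_getD 0 (m := i) (by omega) (by omega) (fun j hj => ?_) ?_
  · rw [hpo j (by omega) (by omega) (by omega), hblo j hj]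
  · rw [hpo i (by omega) (by omega) (by omega), hbmid i le_rfl (by omega)]
    omega

theorem stmt13 (k i j₁ j₂ : ℕ) (a p : List ℕ)
    (hal : a.length = k) (hasort : a.Pairwise (· ≤ ·)) (hapos : ∀ x ∈ a, 0 < x)
    -- indices with `a_{j₂} - a_{j₁} ≥ 2`, `i + 1 ≤ j₁ < j₂ ≤ k` (0-indexed: `j₂ < k`)
    (hij : i + 1 ≤ j₁) (hj12 : j₁ < j₂) (hj2k : j₂ < k)
    (hgap : a.getD j₁ 0 + 2 ≤ a.getD j₂ 0)
    -- `j₁` maximal and `j₂` minimal with this property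
    (hmax : ∀ p' q', i + 1 ≤ p' → p' < q' → q' < k → a.getD p' 0 + 2 ≤ a.getD q' 0 → p' ≤ j₁)
    (hmin : ∀ q', j₁ < q' → q' < k → a.getD j₁ 0 + 2 ≤ a.getD q' 0 → j₂ ≤ q')
    -- the exchanged sequence `p`
    (hpl : p.length = k)
    (hpj1 : p.getD j₁ 0 = a.getD j₁ 0 + 1) (hpj2 : p.getD j₂ 0 = a.getD j₂ 0 - 1)
    (hpo : ∀ j < k, j ≠ j₁ → j ≠ j₂ → p.getD j 0 = a.getD j 0)
    -- the situation of Claim A: `a_i = a_{i+1}` and `a_k ≥ a_i + 3`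
    (hii : a.getD i 0 = a.getD (i + 1) 0) (hak : a.getD i 0 + 3 ≤ a.getD (k - 1) 0) :
    p.Pairwise (· ≤ ·) ∧ (∀ x ∈ p, 0 < x) ∧ p.sum = a.sum ∧ List.Lex (· < ·) a p ∧
    ∀ b : List ℕ, b.length = k → b.Pairwise (· ≤ ·) → (∀ x ∈ b, 0 < x) → b.sum = a.sum →
      (∀ j < i, b.getD j 0 = a.getD j 0) →
      (∀ j, i ≤ j → j < k - 1 → b.getD j 0 = a.getD i 0 + 1) →
      a.getD (k - 1) 0 < b.getD (k - 1) 0 →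
      List.Lex (· < ·) p b :=
  stmt13_general k i j₁ j₂ a p hal hasort hapos hij hj12 hj2k hgap hmax hmin hpl hpj1 hpj2 hpo
end
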